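/- arXiv:2410.05207 — 4 statements merged into one kernel-verified Lean document; each statement's English description precedes it below -/
import Mathlib

section
/- For all positive integers n and k with n >= k, sum_{i=k}^{n} S(n-1, i-1) * s(i, k) / i = (1/n) * binom(n, k) * B_{n-k}. -/
/-! With `n = m + 1`, both sides are coefficients of the power-sum polynomial `Σ_{x<N} x^m` in `N`.
Expanding `x^m = Σ_i S(m,i) x(x-1)⋯(x-i+1)` and summing falling factorials over `x < N` writes it
as `Σ_i S(m,i)/(i+1) · N(N-1)⋯(N-i)`, whose `N^k`-coefficient is `Σ_i S(m,i) s(i+1,k)/(i+1)`;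
Bernoulli's formula writes it as `(B_{m+1}(N) - B_{m+1})/(m+1)`, whose `N^k`-coefficient for
`k ≥ 1` is `binom(m+1,k) B_{m+1-k}/(m+1)`. -/

open Finset

/-- Stirling numbers of the second kind. -/
def stirling2 : ℕ → ℕ → ℕ
  | 0, 0 => 1
  | 0, _ + 1 => 0
  | _ + 1, 0 => 0
  | n + 1, k + 1 => stirling2 n k + (k + 1) * stirling2 n (k + 1)

/-- Signed Stirling numbers of the first kind. -/
def stirling1 : ℕ → ℕ → ℤ
  | 0, 0 => 1
  | 0, _ + 1 => 0
  | n + 1, 0 => -(n : ℤ) * stirling1 n 0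
  | n + 1, k + 1 => stirling1 n k - (n : ℤ) * stirling1 n (k + 1)

/-- Bernoulli numbers of the second kind: `∫₀¹ x(x-1)⋯(x-n+1) dx`. -/
noncomputable def bernoulliStar (n : ℕ) : ℝ :=
  ∫ x in (0:ℝ)..1, (descPochhammer ℝ n).eval x

open Polynomial hiding bernoulli

theorem stirling2_eq_stirlingSecond : stirling2 = Nat.stirlingSecond := by
  funext m k
  induction m generalizing k with
  | zero => cases k <;> rfl
  | succ m ih =>
    cases k with
    | zero => rfl
    | succ k => rw [stirling2, Nat.stirlingSecond_succ_succ, ih, ih, add_comm]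

theorem stirling2_eq_zero_of_lt {m k : ℕ} (h : m < k) : stirling2 m k = 0 := by
  rw [stirling2_eq_stirlingSecond, Nat.stirlingSecond_eq_zero_of_lt h]

theorem coeff_descPochhammer_eq_stirling1 {R : Type*} [Ring R] (m k : ℕ) :
    (descPochhammer R m).coeff k = stirling1 m k := by
  induction m generalizing k with
  | zero => cases k <;> simp [stirling1, coeff_one]
  | succ m ih =>
    rw [descPochhammer_succ_right, ← C_eq_natCast]
    cases k with
    | zero => simp [stirling1, mul_coeff_zero, ih, Nat.cast_comm]
    | succ k =>
      rw [coeff_mul_X_sub_C, ih, ih, stirling1]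
      push_cast
      rw [Nat.cast_comm]

theorem stirling1_eq_zero_of_lt {m k : ℕ} (h : m < k) : stirling1 m k = 0 := by
  have := coeff_descPochhammer_eq_stirling1 (R := ℤ) m k
  rwa [coeff_eq_zero_of_natDegree_lt (by rwa [descPochhammer_natDegree]), eq_comm,
    Int.cast_id] at this

theorem X_pow_eq_sum_stirling2_smul_descPochhammer {R : Type*} [Ring R] (m : ℕ) :
    (X : R[X]) ^ m = ∑ i ∈ range (m + 1), stirling2 m i • descPochhammer R i := by
  induction m with
  | zero => simp [stirling2]
  | succ m ih =>
    have X_mul_descPochhammer (i : ℕ) :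
        X * descPochhammer R i = descPochhammer R (i + 1) + i • descPochhammer R i := by
      rw [descPochhammer_succ_right, mul_sub, ← X_mul, nsmul_eq_mul, Nat.cast_comm]
      abel
    rw [sum_range_succ', stirling2, zero_smul, add_zero, pow_succ', ih, mul_sum]
    simp only [mul_smul_comm, X_mul_descPochhammer, smul_add, sum_add_distrib, stirling2, add_smul]
    congr 1
    rw [sum_range_succ', sum_range_succ, stirling2_eq_zero_of_lt m.lt_succ_self]
    simp only [smul_smul, mul_comm, zero_mul, zero_smul, smul_zero, add_zero]

theorem natCast_mul_sum_range_descPochhammer_eval {R : Type*} [CommRing R] (i N : ℕ) :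
    (i + 1 : R) * ∑ x ∈ range N, (descPochhammer R i).eval (x : R) =
      (descPochhammer R (i + 1)).eval (N : R) := by
  induction N with
  | zero => simp
  | succ N ih =>
    rw [sum_range_succ, mul_add, ih, Nat.cast_succ, descPochhammer_succ_eval,
      descPochhammer_succ_left, eval_mul, eval_comp]
    simp only [eval_X, eval_sub, eval_one, add_sub_cancel_right]
    ring

noncomputable def powerSumPoly (m : ℕ) : ℚ[X] :=
  ∑ i ∈ range (m + 1), C ((stirling2 m i : ℚ) / (i + 1)) * descPochhammer ℚ (i + 1)

theorem powerSumPoly_eval_natCast (m N : ℕ) :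
    (powerSumPoly m).eval (N : ℚ) = ∑ x ∈ range N, (x : ℚ) ^ m := by
  have pow_eval (x : ℕ) :=
    congrArg (eval (x : ℚ)) (X_pow_eq_sum_stirling2_smul_descPochhammer (R := ℚ) m)
  simp only [eval_pow, eval_X, eval_finsetSum, nsmul_eq_mul, eval_natCast_mul] at pow_eval
  simp only [pow_eval, powerSumPoly, eval_finsetSum, eval_mul, eval_C]
  rw [sum_comm]
  refine sum_congr rfl fun i _ => ?_
  rw [← mul_sum, ← natCast_mul_sum_range_descPochhammer_eval]
  field_simp

theorem C_mul_powerSumPoly (m : ℕ) :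
    C ((m : ℚ) + 1) * powerSumPoly m = Polynomial.bernoulli (m + 1) - C (bernoulli (m + 1)) := by
  refine eq_of_infinite_eval_eq _ _ (Set.infinite_of_injective_forall_mem Nat.cast_injective
    fun N => ?_)
  simp [powerSumPoly_eval_natCast, sum_range_pow_eq_bernoulli_sub]

theorem sum_stirling2_mul_stirling1_div (m k : ℕ) (hk : k ≠ 0) (hkm : k ≤ m + 1) :
    ∑ i ∈ range (m + 1), (stirling2 m i : ℚ) * stirling1 (i + 1) k / (i + 1) =
      1 / (m + 1) * ((m + 1).choose k : ℚ) * bernoulli (m + 1 - k) := by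
  have coeff_k := congrArg (coeff · k) (C_mul_powerSumPoly m)
  simp only [coeff_C_mul, coeff_sub, coeff_C, if_neg hk, coeff_bernoulli, if_pos hkm,
    powerSumPoly, finsetSum_coeff, coeff_descPochhammer_eq_stirling1, sub_zero] at coeff_k
  rw [one_div, mul_assoc, mul_comm (_ : ℚ) (bernoulli _), ← coeff_k,
    inv_mul_cancel_left₀ (by positivity)]
  exact sum_congr rfl fun i _ => by ring

theorem stmt5_general (n k : ℕ) (hk : 0 < k) (hkn : k ≤ n) :
    ∑ i ∈ Finset.Icc k n, (stirling2 (n - 1) (i - 1) : ℚ) * (stirling1 i k : ℚ) / i =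
      1 / n * (n.choose k : ℚ) * bernoulli (n - k) := by
  obtain ⟨m, rfl⟩ : ∃ m, n = m + 1 := ⟨n - 1, by omega⟩
  have below_k_vanish : ∀ i ∈ Icc 1 (m + 1), i ∉ Icc k (m + 1) →
      (stirling2 m (i - 1) : ℚ) * (stirling1 i k : ℚ) / i = 0 := fun i _ hi => by
    rw [stirling1_eq_zero_of_lt (by simp_all), Int.cast_zero, mul_zero, zero_div]
  rw [Nat.add_sub_cancel, sum_subset (Icc_subset_Icc_left hk) below_k_vanish,
    ← Ico_add_one_right_eq_Icc, sum_Ico_eq_sum_range]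
  simpa [add_comm] using sum_stirling2_mul_stirling1_div m k hk.ne' hkn

theorem stmt5 (n k : ℕ) (hn : 0 < n) (hk : 0 < k) (hkn : k ≤ n) :
    ∑ i ∈ Finset.Icc k n, (stirling2 (n - 1) (i - 1) : ℚ) * (stirling1 i k : ℚ) / i =
      1 / n * (n.choose k : ℚ) * bernoulli (n - k) :=
  stmt5_general n k hk hkn
end

section
/- For all positive integers n and k with n >= k, sum_{i=k}^{n} s(n-1, i-1) * S(i, k) / i = (1/n) * binom(n, k) * B_{n-k}^*. -/
open Finset

/-!
Put `F x = ∫₀ˣ (t)_{n-1} dt`, where `(t)_m = t(t-1)⋯(t-m+1)`. Expanding `(t)_{n-1}` in signed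
Stirling numbers of the first kind gives `F x = ∑ₘ s(n-1,m) x^{m+1}/(m+1)`, and since
`k! S(i,k) = Δᵏ xⁱ` at `0`, the left-hand side times `k!` is `Δᵏ F 0`.
On the other side, `Δ F j = ∫_j^{j+1} (t)_{n-1} dt`, and the identity
`(t+1)_{m+1} - (t)_{m+1} = (m+1) (t)_m` lowers the degree by one under each further difference,
so `Δᵏ F 0 = (n-1)(n-2)⋯(n-k+1) B*_{n-k}`. Finally `k! binom(n,k) = n (n-1)⋯(n-k+1)`.
-/

open Polynomial fwdDiff

theorem stirling2_eq_zero_of_lt_s8 : ∀ {i k : ℕ}, i < k → stirling2 i k = 0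
  | _, 0, h => absurd h (Nat.not_lt_zero _)
  | 0, _ + 1, _ => rfl
  | i + 1, k + 1, h => by
    rw [stirling2, stirling2_eq_zero_of_lt_s8 (Nat.lt_of_succ_lt_succ h),
      stirling2_eq_zero_of_lt_s8 (Nat.lt_of_succ_lt h), mul_zero, add_zero]

theorem coeff_descPochhammer_int (m j : ℕ) : (descPochhammer ℤ m).coeff j = stirling1 m j := by
  induction m generalizing j with
  | zero => cases j <;> simp [stirling1, coeff_one]
  | succ m ih =>
    rw [descPochhammer_succ_right, ← C_eq_natCast]
    cases j with
    | zero => simp [stirling1, ih, mul_comm]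
    | succ j => rw [coeff_mul_X_sub_C, ih, ih, stirling1]; ring

theorem descPochhammer_eval_eq_sum_stirling1 {R : Type*} [Ring R] (m : ℕ) (x : R) :
    (descPochhammer R m).eval x = ∑ j ∈ range (m + 1), (stirling1 m j : R) * x ^ j := by
  rw [← descPochhammer_map (Int.castRingHom R), eval_map, eval₂_eq_sum_range,
    descPochhammer_natDegree]
  simp [coeff_descPochhammer_int]

theorem integral_descPochhammer_eq_sum_stirling1 (m : ℕ) (c : ℝ) :
    ∫ t in (0 : ℝ)..c, (descPochhammer ℝ m).eval t
      = ∑ j ∈ range (m + 1), (stirling1 m j : ℝ) / (j + 1) * c ^ (j + 1) := by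
  simp_rw [descPochhammer_eval_eq_sum_stirling1]
  rw [intervalIntegral.integral_finsetSum fun j _ =>
    (by fun_prop : Continuous _).intervalIntegrable _ _]
  refine Finset.sum_congr rfl fun j _ => ?_
  rw [intervalIntegral.integral_const_mul, integral_pow, zero_pow j.succ_ne_zero]
  ring

theorem fwdDiff_iter_succ_natCast_mul_apply_zero {R : Type*} [CommRing R] (g : ℕ → R) (n : ℕ) :
    Δ_[1] ^[n + 1] (fun x : ℕ => (x : R) * g x) 0 = (n + 1) * Δ_[1] ^[n] g 1 := by
  have hshift := fwdDiff_iter_comp_add 1 g 1 n 0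
  rw [zero_add] at hshift
  rw [← hshift, fwdDiff_iter_eq_sum_shift, fwdDiff_iter_eq_sum_shift, sum_range_succ', mul_sum]
  simp only [zsmul_eq_mul, Nat.cast_zero, zero_mul, mul_zero, add_zero, zero_add, smul_eq_mul,
    mul_one]
  refine Finset.sum_congr rfl fun j _ => ?_
  have hchoose := congrArg (Nat.cast : ℕ → R) (Nat.add_one_mul_choose_eq n j)
  rw [Nat.add_sub_add_right]
  push_cast at hchoose ⊢
  linear_combination -(-1 : R) ^ (n - j) * g (j + 1) * hchoose

theorem factorial_mul_stirling2_eq_fwdDiff_iter {R : Type*} [CommRing R] (i k : ℕ) :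
    (k.factorial : R) * stirling2 i k = Δ_[1] ^[k] (fun x : ℕ => (x : R) ^ i) 0 := by
  induction i generalizing k with
  | zero =>
    cases k with
    | zero => simp [stirling2]
    | succ k =>
      rw [Function.iterate_succ_apply]
      simp [stirling2, fwdDiff_iter_eq_sum_shift]
  | succ i ih =>
    cases k with
    | zero => simp [stirling2]
    | succ k =>
      have hshift : Δ_[1] ^[k] (fun x : ℕ => (x : R) ^ i) 1
          = Δ_[1] ^[k] (fun x : ℕ => (x : R) ^ i) 0
            + Δ_[1] ^[k + 1] (fun x : ℕ => (x : R) ^ i) 0 := by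
        rw [Function.iterate_succ_apply', fwdDiff, zero_add]
        ring
      simp_rw [pow_succ']
      rw [fwdDiff_iter_succ_natCast_mul_apply_zero, hshift, ← ih, ← ih, stirling2,
        Nat.factorial_succ]
      push_cast
      ring

theorem descPochhammer_eval_add_one_sub_eval {R : Type*} [CommRing R] (m : ℕ) (t : R) :
    (descPochhammer R (m + 1)).eval (t + 1) - (descPochhammer R (m + 1)).eval t
      = (m + 1) * (descPochhammer R m).eval t := by
  rw [descPochhammer_succ_eval m t, descPochhammer_succ_left]
  simp only [eval_mul, eval_X, eval_comp, eval_sub, eval_one, add_sub_cancel_right]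
  ring

theorem fwdDiff_integral_descPochhammer_succ (m : ℕ) :
    Δ_[1] (fun j : ℕ => ∫ t in (j : ℝ)..j + 1, (descPochhammer ℝ (m + 1)).eval t)
      = ((m : ℝ) + 1) • fun j : ℕ => ∫ t in (j : ℝ)..j + 1, (descPochhammer ℝ m).eval t := by
  ext j
  have hshift : Continuous fun t => (descPochhammer ℝ (m + 1)).eval (t + 1) := by fun_prop
  have hcont : Continuous fun t => (descPochhammer ℝ (m + 1)).eval t := by fun_prop
  rw [fwdDiff, Pi.smul_apply, smul_eq_mul, ← intervalIntegral.integral_const_mul, Nat.cast_add,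
    Nat.cast_one, ← intervalIntegral.integral_comp_add_right _ 1,
    ← intervalIntegral.integral_sub (hshift.intervalIntegrable _ _) (hcont.intervalIntegrable _ _)]
  simp only [descPochhammer_eval_add_one_sub_eval]

theorem fwdDiff_iter_integral_descPochhammer_zero {k m : ℕ} (hkm : k ≤ m) :
    Δ_[1] ^[k] (fun j : ℕ => ∫ t in (j : ℝ)..j + 1, (descPochhammer ℝ m).eval t) 0
      = m.descFactorial k * bernoulliStar (m - k) := by
  induction k generalizing m with
  | zero => simp [bernoulliStar]
  | succ k ih =>
    obtain ⟨m, rfl⟩ := Nat.exists_eq_add_of_le' (Nat.zero_lt_of_lt hkm)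
    rw [Function.iterate_succ_apply, fwdDiff_integral_descPochhammer_succ,
      fwdDiff_iter_const_smul, Pi.smul_apply, ih (by omega), Nat.succ_descFactorial_succ,
      Nat.add_sub_add_right, smul_eq_mul]
    push_cast
    ring

theorem fwdDiff_integral_from_zero {f : ℝ → ℝ} (hf : Continuous f) :
    Δ_[1] (fun x : ℕ => ∫ t in (0 : ℝ)..x, f t) = fun j : ℕ => ∫ t in (j : ℝ)..j + 1, f t := by
  ext j
  rw [fwdDiff, Nat.cast_add, Nat.cast_one]
  exact intervalIntegral.integral_interval_sub_left (hf.intervalIntegrable _ _)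
    (hf.intervalIntegrable _ _)

theorem factorial_mul_sum_stirling1_mul_stirling2_eq_fwdDiff_iter (N k : ℕ) :
    (k.factorial : ℝ) * ∑ m ∈ range (N + 1), (stirling1 N m : ℝ) * stirling2 (m + 1) k / (m + 1)
      = Δ_[1] ^[k] (fun x : ℕ => ∫ t in (0 : ℝ)..x, (descPochhammer ℝ N).eval t) 0 := by
  have hpoly : (fun x : ℕ => ∫ t in (0 : ℝ)..x, (descPochhammer ℝ N).eval t)
      = ∑ m ∈ range (N + 1), ((stirling1 N m : ℝ) / (m + 1)) • fun x : ℕ => (x : ℝ) ^ (m + 1) := by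
    ext x
    simp only [integral_descPochhammer_eq_sum_stirling1, Finset.sum_apply, Pi.smul_apply,
      smul_eq_mul]
  rw [hpoly, fwdDiff_iter_finsetSum, Finset.sum_apply, mul_sum]
  refine Finset.sum_congr rfl fun m _ => ?_
  rw [fwdDiff_iter_const_smul, Pi.smul_apply, ← factorial_mul_stirling2_eq_fwdDiff_iter,
    smul_eq_mul]
  ring

theorem stmt8 (n k : ℕ) (hn : 0 < n) (hk : 0 < k) (hkn : k ≤ n) :
    ∑ i ∈ Finset.Icc k n, (stirling1 (n - 1) (i - 1) : ℝ) * (stirling2 i k : ℝ) / i =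
      1 / n * (n.choose k : ℝ) * bernoulliStar (n - k) := by
  obtain ⟨N, rfl⟩ : ∃ N, n = N + 1 := ⟨n - 1, by omega⟩
  obtain ⟨K, rfl⟩ : ∃ K, k = K + 1 := ⟨k - 1, by omega⟩
  have hreindex : ∑ i ∈ Icc (K + 1) (N + 1), (stirling1 N (i - 1) : ℝ) * stirling2 i (K + 1) / i
      = ∑ m ∈ range (N + 1), (stirling1 N m : ℝ) * stirling2 (m + 1) (K + 1) / (m + 1) := by
    rw [sum_subset (Icc_subset_Icc_left (by omega : 1 ≤ K + 1)) fun i hi hik => ?_,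
      ← Ico_add_one_right_eq_Icc, sum_Ico_eq_sum_range]
    · simp only [add_tsub_cancel_right, add_comm 1, Nat.cast_add, Nat.cast_one]
    · have hiK : i < K + 1 := by
        simp only [mem_Icc] at hi hik
        omega
      simp [stirling2_eq_zero_of_lt_s8 hiK]
  have hfactorial :
      ((K + 1).factorial : ℝ) * (N + 1).choose (K + 1) = (N + 1) * N.descFactorial K := by
    exact_mod_cast (Nat.descFactorial_eq_factorial_mul_choose _ _).symm.trans
      (Nat.succ_descFactorial_succ N K)
  have hkey := factorial_mul_sum_stirling1_mul_stirling2_eq_fwdDiff_iter N (K + 1)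
  rw [Function.iterate_succ_apply, fwdDiff_integral_from_zero (descPochhammer ℝ N).continuous,
    fwdDiff_iter_integral_descPochhammer_zero (by omega)] at hkey
  rw [Nat.add_sub_cancel, hreindex, Nat.add_sub_add_right]
  apply mul_left_cancel₀ (Nat.cast_ne_zero.mpr (K + 1).factorial_ne_zero)
  rw [hkey]
  field_simp
  push_cast
  linear_combination -bernoulliStar (N - K) * hfactorial
end

section
/- For all nonnegative integers n, sum_{k=0}^{n} (-1)^k * (k!/(k+2)) * S(n, k) = B_n + B_{n+1}. -/
open Finset

lemma stirling2_eq_zero : ∀ {n k : ℕ}, n < k → stirling2 n k = 0 := by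
  intro n
  induction n with
  | zero =>
    intro k h
    match k, h with
    | k + 1, _ => rfl
  | succ n ih =>
    intro k h
    match k, h with
    | k + 1, h =>
      have h1 : n < k := Nat.lt_of_succ_lt_succ h
      show stirling2 n k + (k + 1) * stirling2 n (k + 1) = 0
      rw [ih h1, ih (h1.trans (Nat.lt_succ_self k))]
      ring

/-- Shift a sum when both the first and the extra last value vanish. -/
lemma sum_shift (f : ℕ → ℚ) (n : ℕ) (h0 : f 0 = 0) (hn : f (n + 1) = 0) :
    ∑ k ∈ Finset.range (n + 1), f (k + 1) = ∑ k ∈ Finset.range (n + 1), f k := by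
  have h1 := Finset.sum_range_succ' f (n + 1)
  have h2 := Finset.sum_range_succ f (n + 1)
  rw [h0, add_zero] at h1
  rw [hn, add_zero] at h2
  rw [← h1, h2]

open Polynomial in
lemma worpitzky (n : ℕ) (x : ℚ) :
    x ^ n = ∑ k ∈ Finset.range (n + 1),
      (stirling2 n k : ℚ) * (descPochhammer ℚ k).eval x := by
  induction n with
  | zero => simp [stirling2]
  | succ n ih =>
    have hx : ∀ k : ℕ, x * (descPochhammer ℚ k).eval x
        = (descPochhammer ℚ (k + 1)).eval x + k * (descPochhammer ℚ k).eval x := by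
      intro k
      rw [descPochhammer_succ_right]
      simp
      ring
    have hshift : ∑ k ∈ Finset.range (n + 1),
          ((k : ℚ) + 1) * (stirling2 n (k + 1) : ℚ) * (descPochhammer ℚ (k + 1)).eval x
        = ∑ k ∈ Finset.range (n + 1),
          (k : ℚ) * (stirling2 n k : ℚ) * (descPochhammer ℚ k).eval x := by
      have := sum_shift (fun i => (i : ℚ) * (stirling2 n i : ℚ) * (descPochhammer ℚ i).eval x)
        n (by simp) (by simp [stirling2_eq_zero (Nat.lt_succ_self n)])
      rw [← this]
      refine Finset.sum_congr rfl fun k _ => ?_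
      push_cast
      ring
    calc x ^ (n + 1)
        = ∑ k ∈ Finset.range (n + 1),
            (stirling2 n k : ℚ) * (descPochhammer ℚ k).eval x * x := by
          rw [pow_succ, ih, Finset.sum_mul]
      _ = ∑ k ∈ Finset.range (n + 1),
            ((stirling2 n k : ℚ) * (descPochhammer ℚ (k + 1)).eval x
              + (k : ℚ) * (stirling2 n k : ℚ) * (descPochhammer ℚ k).eval x) := by
          refine Finset.sum_congr rfl fun k _ => ?_
          rw [mul_assoc, mul_comm ((descPochhammer ℚ k).eval x) x, hx k]
          ring
      _ = ∑ k ∈ Finset.range (n + 1), (stirling2 n k : ℚ) * (descPochhammer ℚ (k + 1)).eval x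
            + ∑ k ∈ Finset.range (n + 1),
              (k : ℚ) * (stirling2 n k : ℚ) * (descPochhammer ℚ k).eval x := by
          rw [Finset.sum_add_distrib]
      _ = ∑ k ∈ Finset.range (n + 2),
            (stirling2 (n + 1) k : ℚ) * (descPochhammer ℚ k).eval x := by
          rw [Finset.sum_range_succ' _ (n + 1)]
          have h0 : (stirling2 (n + 1) 0 : ℚ) * (descPochhammer ℚ 0).eval x = 0 := by
            simp [stirling2]
          rw [h0, add_zero, ← hshift, ← Finset.sum_add_distrib]
          refine Finset.sum_congr rfl fun k _ => ?_
          show (stirling2 n k : ℚ) * _ + _ = ((stirling2 n k + (k + 1) * stirling2 n (k + 1) : ℕ) : ℚ) * _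
          push_cast
          ring

open Polynomial in
lemma sum_pow_eq (n N : ℕ) :
    ∑ x ∈ Finset.range N, (x : ℚ) ^ n
      = ∑ k ∈ Finset.range (n + 1),
          (stirling2 n k : ℚ) * (descPochhammer ℚ (k + 1)).eval (N : ℚ) / (k + 1) := by
  induction N with
  | zero =>
    rw [Finset.range_zero, Finset.sum_empty]
    refine (Finset.sum_eq_zero fun k _ => ?_).symm
    have : (descPochhammer ℚ (k + 1)).eval (0 : ℚ) = 0 := by
      rw [descPochhammer_succ_left]
      simp
    simp [this]
  | succ N ih =>
    rw [Finset.sum_range_succ, ih, worpitzky n N, ← Finset.sum_add_distrib]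
    refine Finset.sum_congr rfl fun k _ => ?_
    have h1 : (descPochhammer ℚ (k + 1)).eval ((N : ℚ) + 1)
        = ((N : ℚ) + 1) * (descPochhammer ℚ k).eval (N : ℚ) := by
      rw [descPochhammer_succ_left]
      simp [eval_comp]
    have h2 : (descPochhammer ℚ (k + 1)).eval (N : ℚ)
        = (descPochhammer ℚ k).eval (N : ℚ) * ((N : ℚ) - k) := by
      rw [descPochhammer_succ_right]
      simp
    push_cast
    rw [h1, h2]
    have hk : ((k : ℚ) + 1) ≠ 0 := by positivity
    field_simp
    ring

open Polynomial in
lemma desc_coeff_one (k : ℕ) :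
    (descPochhammer ℚ (k + 1)).coeff 1 = (-1 : ℚ) ^ k * k.factorial := by
  induction k with
  | zero => simp [descPochhammer_one]
  | succ k ih =>
    have h0 : (descPochhammer ℚ (k + 1)).coeff 0 = 0 := by
      rw [coeff_zero_eq_eval_zero, descPochhammer_succ_left]
      simp
    rw [descPochhammer_succ_right, ← C_eq_natCast, mul_sub, coeff_sub, coeff_mul_X,
      coeff_mul_C, h0, ih]
    push_cast [Nat.factorial_succ]
    ring

open Polynomial in
lemma T1 (n : ℕ) :
    ∑ k ∈ Finset.range (n + 1),
        (-1 : ℚ) ^ k * (k.factorial : ℚ) / (k + 1) * stirling2 n k = _root_.bernoulli n := by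
  set P : ℚ[X] := ∑ k ∈ Finset.range (n + 1),
      C ((stirling2 n k : ℚ) / (k + 1)) * descPochhammer ℚ (k + 1) with hPdef
  set Q : ℚ[X] := ∑ i ∈ Finset.range (n + 1),
      C ((_root_.bernoulli i : ℚ) * ((n + 1).choose i) / (n + 1)) * X ^ (n + 1 - i) with hQdef
  have hPQ : P = Q := by
    apply eq_of_infinite_eval_eq
    apply Set.Infinite.mono (s := Set.range ((↑) : ℕ → ℚ))
    · rintro x ⟨N, rfl⟩
      show P.eval (N : ℚ) = Q.eval (N : ℚ)
      calc P.eval (N : ℚ)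
          = ∑ k ∈ Finset.range (n + 1),
              (stirling2 n k : ℚ) * (descPochhammer ℚ (k + 1)).eval (N : ℚ) / (k + 1) := by
            rw [hPdef, eval_finset_sum]
            refine Finset.sum_congr rfl fun k _ => ?_
            rw [eval_mul, eval_C]
            ring
        _ = ∑ x ∈ Finset.range N, (x : ℚ) ^ n := (sum_pow_eq n N).symm
        _ = ∑ i ∈ Finset.range (n + 1),
              _root_.bernoulli i * ((n + 1).choose i) * (N : ℚ) ^ (n + 1 - i) / (n + 1) :=
            sum_range_pow N n
        _ = Q.eval (N : ℚ) := by
            rw [hQdef, eval_finset_sum]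
            refine (Finset.sum_congr rfl fun i _ => ?_).symm
            rw [eval_mul, eval_C, eval_pow, eval_X]
            ring
    · exact Set.infinite_range_of_injective Nat.cast_injective
  have hcoeffP : P.coeff 1 = ∑ k ∈ Finset.range (n + 1),
      (-1 : ℚ) ^ k * (k.factorial : ℚ) / (k + 1) * stirling2 n k := by
    rw [hPdef, finset_sum_coeff]
    refine Finset.sum_congr rfl fun k _ => ?_
    rw [coeff_C_mul, desc_coeff_one]
    ring
  have hcoeffQ : Q.coeff 1 = _root_.bernoulli n := by
    rw [hQdef, finset_sum_coeff]
    rw [Finset.sum_eq_single n]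
    · rw [coeff_C_mul, coeff_X_pow, Nat.choose_succ_self_right]
      have : n + 1 - n = 1 := by omega
      rw [this, if_pos rfl, mul_one]
      have h1 : ((n : ℚ) + 1) ≠ 0 := by positivity
      push_cast
      field_simp
    · intro i hi hne
      rw [coeff_C_mul, coeff_X_pow, if_neg, mul_zero]
      have : i < n + 1 := Finset.mem_range.mp hi
      omega
    · intro h
      exact absurd (Finset.self_mem_range_succ n) h
  rw [← hcoeffP, hPQ, hcoeffQ]

theorem stmt12 (n : ℕ) :
    ∑ k ∈ Finset.range (n + 1), (-1 : ℚ) ^ k * (k.factorial : ℚ) / (k + 2) * stirling2 n k =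
      bernoulli n + bernoulli (n + 1) := by
  have key : ∑ k ∈ Finset.range (n + 2),
        (-1 : ℚ) ^ k * (k.factorial : ℚ) / (k + 1) * stirling2 (n + 1) k
      = ∑ k ∈ Finset.range (n + 1),
          ((-1 : ℚ) ^ k * (k.factorial : ℚ) / (k + 2) * stirling2 n k
            - (-1 : ℚ) ^ k * (k.factorial : ℚ) / (k + 1) * stirling2 n k) := by
    rw [Finset.sum_range_succ'
      (fun k => (-1 : ℚ) ^ k * (k.factorial : ℚ) / (k + 1) * stirling2 (n + 1) k) (n + 1)]
    have h0 : (-1 : ℚ) ^ 0 * ((Nat.factorial 0 : ℕ) : ℚ) / ((0 : ℕ) + 1) * stirling2 (n + 1) 0 = 0 := by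
      simp [stirling2]
    rw [h0, add_zero]
    have hg : ∑ k ∈ Finset.range (n + 1),
          ((-1 : ℚ) ^ (k + 1) * ((k + 1).factorial : ℚ) * (k + 1) / (k + 2) * stirling2 n (k + 1))
        = ∑ k ∈ Finset.range (n + 1),
          ((-1 : ℚ) ^ k * (k.factorial : ℚ) * k / (k + 1) * stirling2 n k) := by
      have := sum_shift
        (fun i => (-1 : ℚ) ^ i * (i.factorial : ℚ) * i / (i + 1) * stirling2 n i) n
        (by simp) (by simp [stirling2_eq_zero (Nat.lt_succ_self n)])
      rw [← this]
      refine Finset.sum_congr rfl fun k _ => ?_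
      push_cast
      ring
    calc ∑ k ∈ Finset.range (n + 1),
          (-1 : ℚ) ^ (k + 1) * ((k + 1).factorial : ℚ) / (((k + 1 : ℕ) : ℚ) + 1) * stirling2 (n + 1) (k + 1)
        = ∑ k ∈ Finset.range (n + 1),
          ((-1 : ℚ) ^ (k + 1) * ((k + 1).factorial : ℚ) / (k + 2) * stirling2 n k
            + (-1 : ℚ) ^ (k + 1) * ((k + 1).factorial : ℚ) * (k + 1) / (k + 2) * stirling2 n (k + 1)) := by
          refine Finset.sum_congr rfl fun k _ => ?_
          have hs : stirling2 (n + 1) (k + 1) = stirling2 n k + (k + 1) * stirling2 n (k + 1) := rfl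
          rw [hs]
          have hk2 : ((k : ℚ) + 2) ≠ 0 := by positivity
          push_cast
          field_simp
          ring
      _ = ∑ k ∈ Finset.range (n + 1),
          ((-1 : ℚ) ^ (k + 1) * ((k + 1).factorial : ℚ) / (k + 2) * stirling2 n k)
          + ∑ k ∈ Finset.range (n + 1),
          ((-1 : ℚ) ^ k * (k.factorial : ℚ) * k / (k + 1) * stirling2 n k) := by
          rw [Finset.sum_add_distrib, hg]
      _ = ∑ k ∈ Finset.range (n + 1),
          ((-1 : ℚ) ^ k * (k.factorial : ℚ) / (k + 2) * stirling2 n k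
            - (-1 : ℚ) ^ k * (k.factorial : ℚ) / (k + 1) * stirling2 n k) := by
          rw [← Finset.sum_add_distrib]
          refine Finset.sum_congr rfl fun k _ => ?_
          have hk1 : ((k : ℚ) + 1) ≠ 0 := by positivity
          have hk2 : ((k : ℚ) + 2) ≠ 0 := by positivity
          push_cast [Nat.factorial_succ]
          field_simp
          ring
  rw [Finset.sum_sub_distrib, T1 n] at key
  rw [T1 (n + 1)] at key
  linarith
end

section
/- For all nonnegative integers n, sum_{k=0}^{n} s(n, k)/(k+3) = n^2 * B_n^* + (2n+1) * B_{n+1}^* + B_{n+2}^*. -/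
open Finset

lemma stirling1_eq_zero : ∀ n k : ℕ, n < k → stirling1 n k = 0 := by
  intro n
  induction n with
  | zero => intro k hk; cases k with
    | zero => omega
    | succ m => rfl
  | succ n ih =>
    intro k hk
    cases k with
    | zero => omega
    | succ m =>
      show stirling1 n m - (n : ℤ) * stirling1 n (m+1) = 0
      rw [ih m (by omega), ih (m+1) (by omega)]
      ring

lemma eval_descPoch (n : ℕ) (x : ℝ) :
    (descPochhammer ℝ n).eval x = ∑ k ∈ range (n+1), (stirling1 n k : ℝ) * x ^ k := by
  induction n with
  | zero => simp [stirling1]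
  | succ n ih =>
    rw [descPochhammer_succ_right, Polynomial.eval_mul, ih]
    rw [Finset.sum_range_succ' (fun k => (stirling1 (n+1) k : ℝ) * x ^ k) (n+1)]
    have hrec : ∀ k : ℕ, (stirling1 (n+1) (k+1) : ℝ) = stirling1 n k - n * stirling1 n (k+1) := by
      intro k
      show ((stirling1 n k - (n : ℤ) * stirling1 n (k + 1) : ℤ) : ℝ) = _
      push_cast; ring
    have h0 : (stirling1 (n+1) 0 : ℝ) = -n * stirling1 n 0 := by
      show ((-(n : ℤ) * stirling1 n 0 : ℤ) : ℝ) = _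
      push_cast; ring
    simp only [hrec, h0]
    have hsplit : ∑ k ∈ range (n+1), ((stirling1 n k : ℝ) - n * stirling1 n (k+1)) * x ^ (k+1)
        = ∑ k ∈ range (n+1), (stirling1 n k : ℝ) * x ^ (k+1)
          - n * ∑ k ∈ range (n+1), (stirling1 n (k+1) : ℝ) * x ^ (k+1) := by
      rw [Finset.mul_sum, ← Finset.sum_sub_distrib]
      congr 1; ext k; ring
    rw [hsplit]
    have hshift : ∑ k ∈ range (n+1), (stirling1 n (k+1) : ℝ) * x ^ (k+1)
        = ∑ k ∈ range (n+1), (stirling1 n k : ℝ) * x ^ k - stirling1 n 0 := by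
      rw [Finset.sum_range_succ' (fun k => (stirling1 n k : ℝ) * x ^ k) n]
      rw [Finset.sum_range_succ]
      rw [stirling1_eq_zero n (n+1) (by omega)]
      push_cast; ring
    rw [hshift]
    have hx : ∑ k ∈ range (n+1), (stirling1 n k : ℝ) * x ^ (k+1)
        = x * ∑ k ∈ range (n+1), (stirling1 n k : ℝ) * x ^ k := by
      rw [Finset.mul_sum]; congr 1; ext k; ring
    rw [hx]
    simp only [Polynomial.eval_sub, Polynomial.eval_X, Polynomial.eval_natCast]
    ring

theorem stmt16 (n : ℕ) :
    ∑ k ∈ Finset.range (n + 1), (stirling1 n k : ℝ) / (k + 3) =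
      (n : ℝ) ^ 2 * bernoulliStar n + (2 * (n : ℝ) + 1) * bernoulliStar (n + 1) +
        bernoulliStar (n + 2) := by
  simp only [bernoulliStar]
  have intg : ∀ m : ℕ, IntervalIntegrable (fun x => (descPochhammer ℝ m).eval x)
      MeasureTheory.volume 0 1 := fun m => (Polynomial.continuous _).intervalIntegrable _ _
  have key : ∀ x : ℝ, x ^ 2 * (descPochhammer ℝ n).eval x =
      (n : ℝ) ^ 2 * (descPochhammer ℝ n).eval x
      + (2 * (n : ℝ) + 1) * (descPochhammer ℝ (n+1)).eval x
      + (descPochhammer ℝ (n+2)).eval x := by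
    intro x
    simp only [show n + 2 = (n+1)+1 from rfl, descPochhammer_succ_eval]
    push_cast
    ring
  have step1 : ∑ k ∈ Finset.range (n + 1), (stirling1 n k : ℝ) / (k + 3)
      = ∫ x in (0:ℝ)..1, ∑ k ∈ range (n+1), (stirling1 n k : ℝ) * x ^ (k+2) := by
    rw [intervalIntegral.integral_finset_sum]
    · congr 1; ext k
      rw [intervalIntegral.integral_const_mul, integral_pow]
      norm_num
      ring
    · exact fun k _ => (continuous_const.mul (continuous_pow _)).intervalIntegrable _ _
  rw [step1]
  have step2 : (∫ x in (0:ℝ)..1, ∑ k ∈ range (n+1), (stirling1 n k : ℝ) * x ^ (k+2))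
      = ∫ x in (0:ℝ)..1, ((n : ℝ) ^ 2 * (descPochhammer ℝ n).eval x
      + (2 * (n : ℝ) + 1) * (descPochhammer ℝ (n+1)).eval x
      + (descPochhammer ℝ (n+2)).eval x) := by
    apply intervalIntegral.integral_congr
    intro x _
    dsimp only
    rw [← key x, eval_descPoch, Finset.mul_sum]
    congr 1; ext k; ring
  rw [step2]
  rw [intervalIntegral.integral_add (((intg n).const_mul _).add ((intg (n+1)).const_mul _)) (intg (n+2)),
    intervalIntegral.integral_add ((intg n).const_mul _) ((intg (n+1)).const_mul _),
    intervalIntegral.integral_const_mul, intervalIntegral.integral_const_mul]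
end
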